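/- arXiv:2310.16274 — 5 statements merged into one kernel-verified Lean document; each statement's English description precedes it below -/
import Mathlib

section
/- Let n ≥ 1 and let A be a real n×n matrix such that: (i) A is irreducible, i.e. for every pair of indices i, j there is a finite chain i = i₀, i₁, …, i_m = j with A_{i_k, i_{k+1}} ≠ 0 for each k; (ii) every diagonal entry of A is positive; (iii) every off-diagonal entry of A is nonpositive; (iv) every row sum Σ_j A_{ij} is nonnegative; and (v) at least one row sum is strictly positive. Then A is invertible and every entry of A⁻¹ is nonnegative. -/
open Matrix

/-- A real square matrix is irreducible if for every pair of indices `i, j` there is a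
finite chain `i = c 0, c 1, …, c m = j` with `A (c k) (c (k+1)) ≠ 0` for each `k < m`. -/
def MatrixIrreducible {n : ℕ} (A : Matrix (Fin n) (Fin n) ℝ) : Prop :=
  ∀ i j : Fin n, ∃ (m : ℕ) (c : ℕ → Fin n),
    c 0 = i ∧ c m = j ∧ ∀ k, k < m → A (c k) (c (k + 1)) ≠ 0

/-- Minimum principle: if `A x ≥ 0` entrywise, then `x ≥ 0`. -/
lemma key_min {n : ℕ} (A : Matrix (Fin n) (Fin n) ℝ)
    (hirr : MatrixIrreducible A)
    (hoff : ∀ i j, i ≠ j → A i j ≤ 0)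
    (hrow : ∀ i, 0 ≤ ∑ j, A i j)
    (hrow' : ∃ i, 0 < ∑ j, A i j)
    (x : Fin n → ℝ) (hx : ∀ i, 0 ≤ (A *ᵥ x) i) : ∀ i, 0 ≤ x i := by
  by_contra h
  push_neg at h
  obtain ⟨i₁, hi₁⟩ := h
  obtain ⟨i₀, -, hmin⟩ := Finset.exists_min_image Finset.univ x ⟨i₁, Finset.mem_univ i₁⟩
  set m := x i₀ with hm
  have hmin' : ∀ j, m ≤ x j := fun j => hmin j (Finset.mem_univ j)
  have hm0 : m < 0 := lt_of_le_of_lt (hmin' i₁) hi₁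
  have claim : ∀ i, x i = m → (∀ j, A i j ≠ 0 → x j = m) ∧ (∑ j, A i j = 0) := by
    intro i hxi
    have h1 : (A *ᵥ x) i = (∑ j, A i j * (x j - m)) + (∑ j, A i j) * m := by
      rw [Finset.sum_mul, ← Finset.sum_add_distrib]
      simp only [mulVec, dotProduct]
      exact Finset.sum_congr rfl fun j _ => by ring
    have hterm : ∀ j ∈ Finset.univ, A i j * (x j - m) ≤ 0 := by
      intro j _
      by_cases hji : j = i
      · subst hji; rw [hxi]; simp
      · exact mul_nonpos_of_nonpos_of_nonneg (hoff i j (fun e => hji e.symm))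
          (sub_nonneg.mpr (hmin' j))
    have hS1 : (∑ j, A i j * (x j - m)) ≤ 0 := Finset.sum_nonpos hterm
    have hS2 : (∑ j, A i j) * m ≤ 0 := mul_nonpos_of_nonneg_of_nonpos (hrow i) hm0.le
    have hxi' := hx i
    rw [h1] at hxi'
    have hS1z : (∑ j, A i j * (x j - m)) = 0 := le_antisymm hS1 (by linarith)
    have hS2z : (∑ j, A i j) * m = 0 := le_antisymm hS2 (by linarith)
    constructor
    · intro j hAij
      have := (Finset.sum_eq_zero_iff_of_nonpos hterm).mp hS1z j (Finset.mem_univ j)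
      have hsub : x j - m = 0 := by
        rcases mul_eq_zero.mp this with h' | h'
        · exact absurd h' hAij
        · exact h'
      linarith
    · rcases mul_eq_zero.mp hS2z with h' | h'
      · exact h'
      · exact absurd h' hm0.ne
  have all_m : ∀ j, x j = m := by
    intro j
    obtain ⟨M, c, hc0, hcM, hchain⟩ := hirr i₀ j
    have step : ∀ k, k ≤ M → x (c k) = m := by
      intro k
      induction k with
      | zero => intro _; rw [hc0]
      | succ k ih =>
        intro hk
        have hkM : k < M := Nat.lt_of_succ_le hk
        exact (claim (c k) (ih hkM.le)).1 (c (k + 1)) (hchain k hkM)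
    have := step M le_rfl
    rwa [hcM] at this
  obtain ⟨i, hi⟩ := hrow'
  have := (claim i (all_m i)).2
  linarith

theorem stmt_0 (n : ℕ) (hn : 1 ≤ n) (A : Matrix (Fin n) (Fin n) ℝ)
    (hirr : MatrixIrreducible A)
    (hdiag : ∀ i, 0 < A i i)
    (hoff : ∀ i j, i ≠ j → A i j ≤ 0)
    (hrow : ∀ i, 0 ≤ ∑ j, A i j)
    (hrow' : ∃ i, 0 < ∑ j, A i j) :
    IsUnit A ∧ ∀ i j, 0 ≤ A⁻¹ i j := by
  have key := key_min A hirr hoff hrow hrow'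
  have hdet : A.det ≠ 0 := by
    intro hdet
    obtain ⟨v, hv, hAv⟩ := (Matrix.exists_mulVec_eq_zero_iff).mpr hdet
    have h1 : ∀ i, 0 ≤ v i := key v (fun i => by rw [hAv]; simp)
    have h2 : ∀ i, 0 ≤ (-v) i := key (-v) (fun i => by
      rw [Matrix.mulVec_neg, hAv]; simp)
    apply hv
    funext i
    have := h2 i
    simp only [Pi.neg_apply] at this
    have := h1 i
    simp only [Pi.zero_apply]
    linarith [h1 i, h2 i]
  have hUnit : IsUnit A := (Matrix.isUnit_iff_isUnit_det A).mpr (isUnit_iff_ne_zero.mpr hdet)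
  refine ⟨hUnit, fun i j => ?_⟩
  have hinv : A * A⁻¹ = 1 := Matrix.mul_nonsing_inv A (isUnit_iff_ne_zero.mpr hdet)
  have := key (fun k => A⁻¹ k j) (fun i => by
    have : (A *ᵥ fun k => A⁻¹ k j) i = (A * A⁻¹) i j := by
      simp [mulVec, dotProduct, Matrix.mul_apply]
    rw [this, hinv]
    by_cases hij : i = j <;> simp [Matrix.one_apply, hij])
  exact this i
end

section
/- Let ā = (a¹¹, a¹²; a¹², a²²) be a constant symmetric 2×2 matrix with a¹¹ > 0, a²² > 0 and |a¹²| ≤ min{a¹¹, a²²}, and suppose λ¹, λ² lie in the interval ( |a¹¹ − a²²|/(a¹¹ + a²²), 1 − 2|a¹²|/(a¹¹ + a²²) ]. Then the axis-neighbor local stiffness entries satisfy the two-sided bounds: (1/2)(|a¹²| − a²²) ≤ −(1/4)(λ² a¹¹ + λ¹ a²²) + (1/4)(a¹¹ − a²²) < (1/4)( (a¹¹ − a²²) − |a¹¹ − a²²| ) ≤ 0, and (1/2)(|a¹²| − a¹¹) ≤ −(1/4)(λ² a¹¹ + λ¹ a²²) + (1/4)(a²² − a¹¹) < (1/4)( (a²²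 − a¹¹) − |a¹¹ − a²²| ) ≤ 0; in particular both quantities are strictly negative. -/
theorem stmt_6 (a11 a22 a12 l1 l2 : ℝ)
    (h11 : 0 < a11) (h22 : 0 < a22) (h12 : |a12| ≤ min a11 a22)
    (hl1 : |a11 - a22| / (a11 + a22) < l1 ∧ l1 ≤ 1 - 2 * |a12| / (a11 + a22))
    (hl2 : |a11 - a22| / (a11 + a22) < l2 ∧ l2 ≤ 1 - 2 * |a12| / (a11 + a22)) :
    ((1/2) * (|a12| - a22) ≤ -(1/4) * (l2 * a11 + l1 * a22) + (1/4) * (a11 - a22)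
      ∧ -(1/4) * (l2 * a11 + l1 * a22) + (1/4) * (a11 - a22)
          < (1/4) * ((a11 - a22) - |a11 - a22|)
      ∧ (1/4) * ((a11 - a22) - |a11 - a22|) ≤ 0)
    ∧ ((1/2) * (|a12| - a11) ≤ -(1/4) * (l2 * a11 + l1 * a22) + (1/4) * (a22 - a11)
      ∧ -(1/4) * (l2 * a11 + l1 * a22) + (1/4) * (a22 - a11)
          < (1/4) * ((a22 - a11) - |a11 - a22|)
      ∧ (1/4) * ((a22 - a11) - |a11 - a22|) ≤ 0)
    ∧ -(1/4) * (l2 * a11 + l1 * a22) + (1/4) * (a11 - a22) < 0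
    ∧ -(1/4) * (l2 * a11 + l1 * a22) + (1/4) * (a22 - a11) < 0 := by
  have hs : 0 < a11 + a22 := by linarith
  have h12a : |a12| ≤ a11 := le_trans h12 (min_le_left _ _)
  have h12b : |a12| ≤ a22 := le_trans h12 (min_le_right _ _)
  have h12n : 0 ≤ |a12| := abs_nonneg _
  have habs1 : a11 - a22 ≤ |a11 - a22| := le_abs_self _
  have habs2 : -(a11 - a22) ≤ |a11 - a22| := neg_le_abs _
  have hL1 : |a11 - a22| < l1 * (a11 + a22) := (div_lt_iff₀ hs).mp hl1.1
  have hL2 : |a11 - a22| < l2 * (a11 + a22) := (div_lt_iff₀ hs).mp hl2.1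
  have hU1 : l1 * (a11 + a22) ≤ (a11 + a22) - 2 * |a12| := by
    have := mul_le_mul_of_nonneg_right hl1.2 hs.le
    have h2 : 2 * |a12| / (a11 + a22) * (a11 + a22) = 2 * |a12| := by
      field_simp
    nlinarith [this]
  have hU2 : l2 * (a11 + a22) ≤ (a11 + a22) - 2 * |a12| := by
    have := mul_le_mul_of_nonneg_right hl2.2 hs.le
    have h2 : 2 * |a12| / (a11 + a22) * (a11 + a22) = 2 * |a12| := by
      field_simp
    nlinarith [this]
  -- key: l2*a11 + l1*a22 bounds
  have hlow : |a11 - a22| < l2 * a11 + l1 * a22 := by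
    nlinarith [hL1, hL2, mul_pos h11 h22]
  have hhigh : l2 * a11 + l1 * a22 ≤ (a11 + a22) - 2 * |a12| := by
    nlinarith [hU1, hU2, mul_pos h11 h22]
  refine ⟨⟨by linarith, by linarith, by linarith⟩,
          ⟨by linarith, by linarith, by linarith⟩, by linarith, by linarith⟩
end

section
/- Let ā = (a¹¹, a¹²; a¹², a²²) be a constant symmetric 2×2 matrix with a¹¹ > 0, a²² > 0 and |a¹²| ≤ min{a¹¹, a²²}, and suppose λ¹, λ² lie in the interval ( |a¹¹ − a²²|/(a¹¹ + a²²), 1 − 2|a¹²|/(a¹¹ + a²²) ]. Then the diagonal-neighbor local stiffness entries satisfy: −(1/2)( min{a¹¹, a²²} + a¹² ) < −(1/4)( (1−λ²) a¹¹ + (1−λ¹) a²² ) − (1/2) a¹² ≤ −(1/2)( |a¹²| + a¹² ) ≤ 0, and −(1/2)( min{a¹¹, a²²} − a¹² ) < −(1/4)( (1−λ²) a¹¹ + (1−λ¹) a²² ) + (1/2) a¹² ≤ −(1/2)( |a¹²| − a¹² ) ≤ 0; in particular both quantities are nonpositive. -/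
/-! With `S = (1 - λ²) a¹¹ + (1 - λ¹) a²²` the two entries are `-S/4 ∓ a¹²/2`, so everything follows
linearly from `2|a¹²| ≤ S < 2 min(a¹¹, a²²)`. Since `a¹¹, a²² > 0`, the two ends of the interval for
`λⁱ` bound `S` below by `2|a¹²|` and strictly above by `a¹¹ + a²² - |a¹¹ - a²²| = 2 min(a¹¹, a²²)`. -/

lemma le_one_sub_mul_add_one_sub_mul {a b k l₁ l₂ : ℝ} (ha : 0 ≤ a) (hb : 0 ≤ b) (hab : 0 < a + b)
    (hl₁ : l₁ ≤ 1 - k / (a + b)) (hl₂ : l₂ ≤ 1 - k / (a + b)) :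
    k ≤ (1 - l₂) * a + (1 - l₁) * b :=
  calc k = k / (a + b) * a + k / (a + b) * b := by field_simp
    _ ≤ (1 - l₂) * a + (1 - l₁) * b := by gcongr <;> linarith

lemma one_sub_mul_add_one_sub_mul_lt {a b d l₁ l₂ : ℝ} (ha : 0 < a) (hb : 0 < b)
    (hl₁ : d / (a + b) < l₁) (hl₂ : d / (a + b) < l₂) :
    (1 - l₂) * a + (1 - l₁) * b < a + b - d :=
  calc (1 - l₂) * a + (1 - l₁) * b < (1 - d / (a + b)) * a + (1 - d / (a + b)) * b := by
        gcongr
    _ = a + b - d := by field_simp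

lemma two_mul_min_eq_add_sub_abs_sub (a b : ℝ) : 2 * min a b = a + b - |a - b| := by
  linarith [min_add_max a b, max_sub_min_eq_abs' a b]

theorem stmt_7_general (a11 a22 a12 l1 l2 : ℝ)
    (h11 : 0 < a11) (h22 : 0 < a22)
    (hl1 : |a11 - a22| / (a11 + a22) < l1 ∧ l1 ≤ 1 - 2 * |a12| / (a11 + a22))
    (hl2 : |a11 - a22| / (a11 + a22) < l2 ∧ l2 ≤ 1 - 2 * |a12| / (a11 + a22)) :
    (-(1/2) * (min a11 a22 + a12)
        < -(1/4) * ((1 - l2) * a11 + (1 - l1) * a22) - (1/2) * a12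
      ∧ -(1/4) * ((1 - l2) * a11 + (1 - l1) * a22) - (1/2) * a12
          ≤ -(1/2) * (|a12| + a12)
      ∧ -(1/2) * (|a12| + a12) ≤ 0)
    ∧ (-(1/2) * (min a11 a22 - a12)
        < -(1/4) * ((1 - l2) * a11 + (1 - l1) * a22) + (1/2) * a12
      ∧ -(1/4) * ((1 - l2) * a11 + (1 - l1) * a22) + (1/2) * a12
          ≤ -(1/2) * (|a12| - a12)
      ∧ -(1/2) * (|a12| - a12) ≤ 0)
    ∧ -(1/4) * ((1 - l2) * a11 + (1 - l1) * a22) - (1/2) * a12 ≤ 0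
    ∧ -(1/4) * ((1 - l2) * a11 + (1 - l1) * a22) + (1/2) * a12 ≤ 0 := by
  have hS_ge : 2 * |a12| ≤ (1 - l2) * a11 + (1 - l1) * a22 :=
    le_one_sub_mul_add_one_sub_mul h11.le h22.le (add_pos h11 h22) hl1.2 hl2.2
  have hS_lt : (1 - l2) * a11 + (1 - l1) * a22 < 2 * min a11 a22 := by
    rw [two_mul_min_eq_add_sub_abs_sub]
    exact one_sub_mul_add_one_sub_mul_lt h11 h22 hl1.1 hl2.1
  refine ⟨⟨?_, ?_, ?_⟩, ⟨?_, ?_, ?_⟩, ?_, ?_⟩ <;> linarith [le_abs_self a12, neg_le_abs a12]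

theorem stmt_7 (a11 a22 a12 l1 l2 : ℝ)
    (h11 : 0 < a11) (h22 : 0 < a22) (h12 : |a12| ≤ min a11 a22)
    (hl1 : |a11 - a22| / (a11 + a22) < l1 ∧ l1 ≤ 1 - 2 * |a12| / (a11 + a22))
    (hl2 : |a11 - a22| / (a11 + a22) < l2 ∧ l2 ≤ 1 - 2 * |a12| / (a11 + a22)) :
    (-(1/2) * (min a11 a22 + a12)
        < -(1/4) * ((1 - l2) * a11 + (1 - l1) * a22) - (1/2) * a12
      ∧ -(1/4) * ((1 - l2) * a11 + (1 - l1) * a22) - (1/2) * a12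
          ≤ -(1/2) * (|a12| + a12)
      ∧ -(1/2) * (|a12| + a12) ≤ 0)
    ∧ (-(1/2) * (min a11 a22 - a12)
        < -(1/4) * ((1 - l2) * a11 + (1 - l1) * a22) + (1/2) * a12
      ∧ -(1/4) * ((1 - l2) * a11 + (1 - l1) * a22) + (1/2) * a12
          ≤ -(1/2) * (|a12| - a12)
      ∧ -(1/2) * (|a12| - a12) ≤ 0)
    ∧ -(1/4) * ((1 - l2) * a11 + (1 - l1) * a22) - (1/2) * a12 ≤ 0
    ∧ -(1/4) * ((1 - l2) * a11 + (1 - l1) * a22) + (1/2) * a12 ≤ 0 :=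
  stmt_7_general a11 a22 a12 l1 l2 h11 h22 hl1 hl2
end

section
/- Let n ≥ 2 be an integer, h > 0, c ≥ 0, and let ā = (a¹¹, a¹²; a¹², a²²) be a constant symmetric 2×2 matrix with a¹¹ > 0, a²² > 0 and |a¹²| ≤ min{a¹¹, a²²}. Suppose λ¹, λ² lie in the interval ( |a¹¹ − a²²|/(a¹¹ + a²²), 1 − 2|a¹²|/(a¹¹ + a²²) ]. Define the matrix A indexed by the interior nodes (i,j), 1 ≤ i, j ≤ n−1, of an n×n uniform square grid of mesh size h, with entries A_{(i,j),(k,l)} given by the nine-point stencil: A_{(i,j),(i,j)} = (1+λ²) a¹¹ + (1+λ¹) a²² + c h²; A_{(i,j),(i±1,j)} = −(1/2)(λ² a¹¹ + λ¹ a²²) + (1/2)(a²² − a¹¹); A_{(i,j),(i,j±1)} = −(1/2)(λ² a¹¹ + λ¹ a²²) + (1/2)(a¹¹ − a²²); A_{(i,j),(i+1,j+1)} = A_{(i,j),(i−1,j−1)} = −(1/4)( (1−λ²) a¹¹ + (1−λ¹) a²² ) − (1/2) a¹²; A_{(i,j),(i+1,j−1)} = A_{(i,j),(i−1,j+1)}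 = −(1/4)( (1−λ²) a¹¹ + (1−λ¹) a²² ) + (1/2) a¹²; and A_{(i,j),(k,l)} = 0 whenever max{|i−k|, |j−l|} ≥ 2 (entries referring to nodes outside the index range are simply omitted). Then A is invertible and every entry of A⁻¹ is nonnegative. -/
/-!
A matrix with nonpositive off-diagonal entries that maps some positive vector `x` to a
positive vector is monotone: comparing a vector `z` with multiples of `x` gives the discrete
maximum principle `0 ≤ A *ᵥ z → 0 ≤ z`, hence injectivity and nonnegative columns of `A⁻¹`.
The bounds on `λ¹, λ²` make every off-diagonal stencil weight nonpositive. For the barrier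
`x(i, j) = i (n - i) + j (n - j)` (in mesh-node coordinates) the full stencil sum is
`2a¹¹ + 2a²² + c h² x(i, j) > 0`; near the boundary the matrix omits neighbours, but these carry
nonpositive weights against a nonnegative barrier, so `A *ᵥ x` is still positive.
-/

open Matrix

noncomputable section

/-- The nine-point stencil of the Q¹ finite element method with mixed quadrature
(parameters `l1, l2`) for the operator `u ↦ -∇·(ā∇u) + c u` with constant coefficients
on a uniform square mesh of size `h`, as a function of the index offsets
`di = i - k`, `dj = j - l`. -/
def stencil (a11 a12 a22 c h l1 l2 : ℝ) (di dj : ℤ) : ℝ :=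
  if di = 0 ∧ dj = 0 then
    (1 + l2) * a11 + (1 + l1) * a22 + c * h ^ 2
  else if (di = 1 ∨ di = -1) ∧ dj = 0 then
    -(1/2) * (l2 * a11 + l1 * a22) + (1/2) * (a22 - a11)
  else if di = 0 ∧ (dj = 1 ∨ dj = -1) then
    -(1/2) * (l2 * a11 + l1 * a22) + (1/2) * (a11 - a22)
  else if (di = 1 ∧ dj = 1) ∨ (di = -1 ∧ dj = -1) then
    -(1/4) * ((1 - l2) * a11 + (1 - l1) * a22) - (1/2) * a12
  else if (di = 1 ∧ dj = -1) ∨ (di = -1 ∧ dj = 1) then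
    -(1/4) * ((1 - l2) * a11 + (1 - l1) * a22) + (1/2) * a12
  else 0

namespace Matrix

variable {ι 𝕜 : Type*} [Fintype ι] [Field 𝕜] [LinearOrder 𝕜] [IsStrictOrderedRing 𝕜]
  {A : Matrix ι ι 𝕜} {x : ι → 𝕜}

/-- At an index `p` minimising `z p / x p`, the vector `z - t • x` with `t = z p / x p` is
nonnegative and vanishes at `p`, so the nonpositive off-diagonal entries give
`(A *ᵥ z) p ≤ t * (A *ᵥ x) p`, which is negative if `t` is. -/
theorem nonneg_of_nonneg_mulVec (hoff : ∀ i j, i ≠ j → A i j ≤ 0) (hx : ∀ i, 0 < x i)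
    (hAx : ∀ i, 0 < (A *ᵥ x) i) {z : ι → 𝕜} (hz : 0 ≤ A *ᵥ z) : 0 ≤ z := by
  by_contra hneg
  obtain ⟨i₀, hi₀⟩ : ∃ i, z i < 0 := by simpa [Pi.le_def] using hneg
  obtain ⟨p, -, hp⟩ :=
    Finset.exists_min_image Finset.univ (fun i => z i / x i) ⟨i₀, Finset.mem_univ _⟩
  set t := z p / x p
  have ht : t < 0 := (hp i₀ (Finset.mem_univ _)).trans_lt (div_neg_of_neg_of_pos hi₀ (hx i₀))
  have hle : ∀ q, A p q * z q ≤ A p q * (t * x q) := by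
    intro q
    rcases eq_or_ne p q with rfl | hpq
    · rw [div_mul_cancel₀ _ (hx p).ne']
    · exact mul_le_mul_of_nonpos_left ((le_div_iff₀ (hx q)).mp (hp q (Finset.mem_univ _)))
        (hoff p q hpq)
  have : (A *ᵥ z) p ≤ t * (A *ᵥ x) p := by
    simp only [mulVec, dotProduct, Finset.mul_sum]
    refine Finset.sum_le_sum fun q _ => (hle q).trans_eq ?_
    ring
  exact absurd (hz p) (this.trans_lt (mul_neg_of_neg_of_pos ht (hAx p))).not_ge

variable [DecidableEq ι]

theorem isUnit_of_mulVec_pos (hoff : ∀ i j, i ≠ j → A i j ≤ 0) (hx : ∀ i, 0 < x i)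
    (hAx : ∀ i, 0 < (A *ᵥ x) i) : IsUnit A := by
  refine mulVec_injective_iff_isUnit.mp fun u v huv => ?_
  have h₀ : A *ᵥ (u - v) = 0 := by rw [mulVec_sub, huv, sub_self]
  have h₁ := nonneg_of_nonneg_mulVec hoff hx hAx h₀.ge
  have h₂ := nonneg_of_nonneg_mulVec hoff hx hAx (z := v - u)
    (by rw [← neg_sub, mulVec_neg, h₀, neg_zero])
  exact sub_eq_zero.mp (le_antisymm (by simpa using h₂) h₁)

theorem inv_nonneg_of_mulVec_pos (hoff : ∀ i j, i ≠ j → A i j ≤ 0) (hx : ∀ i, 0 < x i)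
    (hAx : ∀ i, 0 < (A *ᵥ x) i) (i j : ι) : 0 ≤ A⁻¹ i j := by
  have hdet := (isUnit_iff_isUnit_det A).mp (isUnit_of_mulVec_pos hoff hx hAx)
  have hcol : A *ᵥ (A⁻¹ *ᵥ Pi.single j 1) = Pi.single j 1 := by
    rw [mulVec_mulVec, mul_nonsing_inv A hdet, one_mulVec]
  have := nonneg_of_nonneg_mulVec hoff hx hAx (hcol ▸ Pi.single_nonneg.mpr zero_le_one) i
  simpa [mulVec_single_one] using this

end Matrix

theorem Finset.sum_le_sum_of_nonpos_sdiff_of_eq_zero_sdiff {α M : Type*} [DecidableEq α]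
    [AddCommMonoid M] [PartialOrder M] [IsOrderedAddMonoid M] {s t : Finset α} {f : α → M}
    (hs : ∀ a ∈ s \ t, f a ≤ 0) (ht : ∀ a ∈ t \ s, f a = 0) :
    ∑ a ∈ s, f a ≤ ∑ a ∈ t, f a := by
  rw [← s.sum_inter_add_sum_sdiff t, ← t.sum_inter_add_sum_sdiff s, Finset.sum_eq_zero ht,
    Finset.inter_comm, add_zero]
  exact add_le_of_nonpos_right (Finset.sum_nonpos hs)

theorem le_mul_add_mul_of_div_le {𝕜 : Type*} [Field 𝕜] [LinearOrder 𝕜] [IsStrictOrderedRing 𝕜]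
    {r a b s t : 𝕜} (ha : 0 ≤ a) (hb : 0 ≤ b) (hab : 0 < a + b)
    (hs : r / (a + b) ≤ s) (ht : r / (a + b) ≤ t) : r ≤ s * a + t * b :=
  calc r = r / (a + b) * a + r / (a + b) * b := by field_simp
    _ ≤ s * a + t * b := by gcongr

section Stencil

variable {a11 a12 a22 c h l1 l2 : ℝ}

theorem stencil_eq_zero_of_far {di dj : ℤ} (hd : 2 ≤ di ∨ di ≤ -2 ∨ 2 ≤ dj ∨ dj ≤ -2) :
    stencil a11 a12 a22 c h l1 l2 di dj = 0 := by
  unfold stencil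
  split_ifs <;> first | rfl | omega

theorem stencil_nonpos (hedge : |a11 - a22| ≤ l2 * a11 + l1 * a22)
    (hdiag : 2 * |a12| ≤ (1 - l2) * a11 + (1 - l1) * a22) {di dj : ℤ} (hd : (di, dj) ≠ (0, 0)) :
    stencil a11 a12 a22 c h l1 l2 di dj ≤ 0 := by
  have := le_abs_self (a11 - a22)
  have := neg_abs_le (a11 - a22)
  have := le_abs_self a12
  have := neg_abs_le a12
  unfold stencil
  split_ifs with h0 <;> first | linarith | exact (hd (by rw [h0.1, h0.2])).elim

/-- The profile `t ↦ (t + 1)(n - 1 - t)`: the index `t` of `Fin (n - 1)` stands for the mesh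
node `t + 1`, so the profile vanishes at the boundary nodes `t = -1` and `t = n - 1`. -/
def parabola (n : ℕ) (t : ℤ) : ℝ := ((t : ℝ) + 1) * ((n : ℝ) - 1 - t)

def barrier (n : ℕ) (z : ℤ × ℤ) : ℝ := parabola n z.1 + parabola n z.2

theorem parabola_nonneg {n : ℕ} {t : ℤ} (h₀ : -1 ≤ t) (h₁ : t ≤ n - 1) : 0 ≤ parabola n t := by
  have h₀' : (-1 : ℝ) ≤ t := by exact_mod_cast h₀
  have h₁' : (t : ℝ) ≤ n - 1 := by exact_mod_cast h₁
  exact mul_nonneg (by linarith) (by linarith)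

theorem parabola_pos {n : ℕ} {t : ℤ} (h₀ : 0 ≤ t) (h₁ : t ≤ n - 2) : 0 < parabola n t := by
  have h₀' : (0 : ℝ) ≤ t := by exact_mod_cast h₀
  have h₁' : (t : ℝ) ≤ n - 2 := by exact_mod_cast h₁
  exact mul_pos (by linarith) (by linarith)

/-- The stencil is exact on quadratics, and `-∇·(ā∇X) = 2a¹¹ + 2a²²` for `X = barrier n`. -/
theorem sum_stencil_mul_barrier (n : ℕ) (i j : ℤ) :
    ∑ z ∈ Finset.Icc (i - 1) (i + 1) ×ˢ Finset.Icc (j - 1) (j + 1),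
      stencil a11 a12 a22 c h l1 l2 (i - z.1) (j - z.2) * barrier n z
    = 2 * a11 + 2 * a22 + c * h ^ 2 * barrier n (i, j) := by
  have hIcc : ∀ k : ℤ,
      Finset.Icc (k - 1) (k + 1) = ({-1, 0, 1} : Finset ℤ).map (addLeftEmbedding k) := by
    intro k; ext t; simp only [Finset.mem_Icc, Finset.map_insert, Finset.map_singleton,
      addLeftEmbedding_apply, Finset.mem_insert, Finset.mem_singleton]
    omega
  rw [Finset.sum_product, hIcc, hIcc]
  simp only [Finset.sum_map, addLeftEmbedding_apply, sub_add_cancel_left]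
  norm_num [Finset.sum_insert, stencil, barrier, parabola]
  ring

end Stencil

@[simps]
def gridEmbedding (m : ℕ) : Fin m × Fin m ↪ ℤ × ℤ where
  toFun q := (q.1, q.2)
  inj' p q hpq := by
    simp only [Prod.mk.injEq, Nat.cast_inj, Fin.val_inj] at hpq
    exact Prod.ext hpq.1 hpq.2

section StencilMatrix

variable {n : ℕ} {a11 a12 a22 c h l1 l2 : ℝ}
  {A : Matrix (Fin (n - 1) × Fin (n - 1)) (Fin (n - 1) × Fin (n - 1)) ℝ}

theorem barrier_gridEmbedding_pos (q : Fin (n - 1) × Fin (n - 1)) :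
    0 < barrier n (gridEmbedding (n - 1) q) := by
  have h₁ := q.1.isLt
  have h₂ := q.2.isLt
  rw [barrier, gridEmbedding_apply]
  exact add_pos (parabola_pos (by omega) (by omega)) (parabola_pos (by omega) (by omega))

theorem stencilMatrix_offDiag_nonpos
    (hA : ∀ p q : Fin (n - 1) × Fin (n - 1), A p q = stencil a11 a12 a22 c h l1 l2
      ((p.1 : ℤ) - (q.1 : ℤ)) ((p.2 : ℤ) - (q.2 : ℤ)))
    (hedge : |a11 - a22| ≤ l2 * a11 + l1 * a22)
    (hdiag : 2 * |a12| ≤ (1 - l2) * a11 + (1 - l1) * a22) (p q : Fin (n - 1) × Fin (n - 1))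
    (hpq : p ≠ q) : A p q ≤ 0 := by
  rw [hA]
  refine stencil_nonpos hedge hdiag fun h0 => hpq ((gridEmbedding _).injective ?_)
  simp only [Prod.mk.injEq, sub_eq_zero] at h0
  simp only [gridEmbedding_apply, h0]

theorem stencilMatrix_mulVec_barrier_pos
    (hA : ∀ p q : Fin (n - 1) × Fin (n - 1), A p q = stencil a11 a12 a22 c h l1 l2
      ((p.1 : ℤ) - (q.1 : ℤ)) ((p.2 : ℤ) - (q.2 : ℤ)))
    (hc : 0 ≤ c) (hsum : 0 < a11 + a22) (hedge : |a11 - a22| ≤ l2 * a11 + l1 * a22)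
    (hdiag : 2 * |a12| ≤ (1 - l2) * a11 + (1 - l1) * a22) (p : Fin (n - 1) × Fin (n - 1)) :
    0 < (A *ᵥ fun q => barrier n (gridEmbedding (n - 1) q)) p := by
  set i : ℤ := (p.1 : ℤ)
  set j : ℤ := (p.2 : ℤ)
  have hi := p.1.isLt
  have hj := p.2.isLt
  set F : ℤ × ℤ → ℝ := fun z => stencil a11 a12 a22 c h l1 l2 (i - z.1) (j - z.2) * barrier n z
  set S := Finset.univ.map (gridEmbedding (n - 1))
  have hp : (i, j) ∈ S := Finset.mem_map_of_mem _ (Finset.mem_univ p)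
  have hmulVec : (A *ᵥ fun q => barrier n (gridEmbedding (n - 1) q)) p = ∑ z ∈ S, F z := by
    simp only [S, F, Finset.sum_map, mulVec, dotProduct, hA, gridEmbedding_apply]
    rfl
  rw [hmulVec]
  calc 0 < 2 * a11 + 2 * a22 + c * h ^ 2 * barrier n (i, j) := by
        have : 0 ≤ c * h ^ 2 * barrier n (i, j) :=
          mul_nonneg (mul_nonneg hc (sq_nonneg h)) (barrier_gridEmbedding_pos p).le
        linarith
    _ = ∑ z ∈ Finset.Icc (i - 1) (i + 1) ×ˢ Finset.Icc (j - 1) (j + 1), F z :=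
        (sum_stencil_mul_barrier n i j).symm
    _ ≤ ∑ z ∈ S, F z := by
        refine Finset.sum_le_sum_of_nonpos_sdiff_of_eq_zero_sdiff (fun z hz => ?_) (fun z hz => ?_)
        · obtain ⟨hzT, hzS⟩ := Finset.mem_sdiff.mp hz
          simp only [Finset.mem_product, Finset.mem_Icc] at hzT
          refine mul_nonpos_of_nonpos_of_nonneg (stencil_nonpos hedge hdiag fun h0 => hzS ?_)
            (add_nonneg (parabola_nonneg (by omega) (by omega))
              (parabola_nonneg (by omega) (by omega)))
          simp only [Prod.mk.injEq, sub_eq_zero] at h0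
          rwa [show z = (i, j) from Prod.ext h0.1.symm h0.2.symm]
        · obtain ⟨hzS, hzT⟩ := Finset.mem_sdiff.mp hz
          simp only [Finset.mem_product, Finset.mem_Icc, not_and_or, not_le] at hzT
          exact mul_eq_zero_of_left (stencil_eq_zero_of_far (by omega)) _

end StencilMatrix

theorem stmt_9_general (n : ℕ) (h c a11 a12 a22 l1 l2 : ℝ)
    (hc : 0 ≤ c)
    (h11 : 0 < a11) (h22 : 0 < a22)
    (hl1 : |a11 - a22| / (a11 + a22) < l1 ∧ l1 ≤ 1 - 2 * |a12| / (a11 + a22))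
    (hl2 : |a11 - a22| / (a11 + a22) < l2 ∧ l2 ≤ 1 - 2 * |a12| / (a11 + a22))
    (A : Matrix (Fin (n - 1) × Fin (n - 1)) (Fin (n - 1) × Fin (n - 1)) ℝ)
    (hA : ∀ p q : Fin (n - 1) × Fin (n - 1),
      A p q = stencil a11 a12 a22 c h l1 l2
        ((p.1 : ℤ) - (q.1 : ℤ)) ((p.2 : ℤ) - (q.2 : ℤ))) :
    IsUnit A ∧ ∀ p q, 0 ≤ A⁻¹ p q := by
  have hsum : 0 < a11 + a22 := add_pos h11 h22
  have hedge : |a11 - a22| ≤ l2 * a11 + l1 * a22 :=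
    le_mul_add_mul_of_div_le h11.le h22.le hsum hl2.1.le hl1.1.le
  have hdiag : 2 * |a12| ≤ (1 - l2) * a11 + (1 - l1) * a22 :=
    le_mul_add_mul_of_div_le h11.le h22.le hsum (by linarith [hl2.2]) (by linarith [hl1.2])
  have hoff := stencilMatrix_offDiag_nonpos hA hedge hdiag
  have hAx := stencilMatrix_mulVec_barrier_pos hA hc hsum hedge hdiag
  exact ⟨isUnit_of_mulVec_pos hoff barrier_gridEmbedding_pos hAx,
    inv_nonneg_of_mulVec_pos hoff barrier_gridEmbedding_pos hAx⟩

theorem stmt_9 (n : ℕ) (hn : 2 ≤ n) (h c a11 a12 a22 l1 l2 : ℝ)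
    (hh : 0 < h) (hc : 0 ≤ c)
    (h11 : 0 < a11) (h22 : 0 < a22) (h12 : |a12| ≤ min a11 a22)
    (hl1 : |a11 - a22| / (a11 + a22) < l1 ∧ l1 ≤ 1 - 2 * |a12| / (a11 + a22))
    (hl2 : |a11 - a22| / (a11 + a22) < l2 ∧ l2 ≤ 1 - 2 * |a12| / (a11 + a22))
    (A : Matrix (Fin (n - 1) × Fin (n - 1)) (Fin (n - 1) × Fin (n - 1)) ℝ)
    (hA : ∀ p q : Fin (n - 1) × Fin (n - 1),
      A p q = stencil a11 a12 a22 c h l1 l2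
        ((p.1 : ℤ) - (q.1 : ℤ)) ((p.2 : ℤ) - (q.2 : ℤ))) :
    IsUnit A ∧ ∀ p q, 0 ≤ A⁻¹ p q :=
  stmt_9_general n h c a11 a12 a22 l1 l2 hc h11 h22 hl1 hl2 A hA

end
end

section
/- Let ā be a symmetric positive definite 2×2 real matrix and let c₀, c₁, c₂, c₃ ∈ ℝ² satisfy the quadrilateral closure relation c₁ + c₂ = c₀ + c₃. Write u = c₀ + c₂ and v = c₁ + c₃. Then |uᵀ ā⁻¹ v| ≤ min{ uᵀ ā⁻¹ u , vᵀ ā⁻¹ v } holds if and only if all four of the following inequalities hold: uᵀ ā⁻¹ (c₀ + c₃) ≥ 0, uᵀ ā⁻¹ (c₀ − c₁) ≥ 0, vᵀ ā⁻¹ (c₀ + c₃) ≥ 0, and vᵀ ā⁻¹ (c₁ − c₀) ≥ 0. -/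
open Matrix

theorem stmt_11 (A : Matrix (Fin 2) (Fin 2) ℝ) (hA : A.PosDef)
    (c0 c1 c2 c3 : Fin 2 → ℝ) (hclose : c1 + c2 = c0 + c3) :
    (|(c0 + c2) ⬝ᵥ (A⁻¹ *ᵥ (c1 + c3))|
        ≤ min ((c0 + c2) ⬝ᵥ (A⁻¹ *ᵥ (c0 + c2))) ((c1 + c3) ⬝ᵥ (A⁻¹ *ᵥ (c1 + c3))))
    ↔ (0 ≤ (c0 + c2) ⬝ᵥ (A⁻¹ *ᵥ (c0 + c3))
        ∧ 0 ≤ (c0 + c2) ⬝ᵥ (A⁻¹ *ᵥ (c0 - c1))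
        ∧ 0 ≤ (c1 + c3) ⬝ᵥ (A⁻¹ *ᵥ (c0 + c3))
        ∧ 0 ≤ (c1 + c3) ⬝ᵥ (A⁻¹ *ᵥ (c1 - c0))) := by
  have hH : (A⁻¹).IsHermitian := hA.isHermitian.inv
  set u := c0 + c2 with hu
  set v := c1 + c3 with hv
  have hsym : v ⬝ᵥ (A⁻¹ *ᵥ u) = u ⬝ᵥ (A⁻¹ *ᵥ v) := by
    rw [dotProduct_mulVec, ← mulVec_transpose, dotProduct_comm]
    congr 1
    rw [← conjTranspose_eq_transpose_of_trivial, hH.eq]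
  have hP : c0 + c3 = (2:ℝ)⁻¹ • (u + v) := by
    funext i
    have h := congrFun hclose i
    simp only [Pi.add_apply] at h
    simp only [hu, hv, Pi.smul_apply, Pi.add_apply, smul_eq_mul]
    linarith
  have hM : c0 - c1 = (2:ℝ)⁻¹ • (u - v) := by
    funext i
    have h := congrFun hclose i
    simp only [Pi.add_apply] at h
    simp only [hu, hv, Pi.smul_apply, Pi.add_apply, Pi.sub_apply, smul_eq_mul]
    linarith
  have hM' : c1 - c0 = (2:ℝ)⁻¹ • (v - u) := by
    rw [show c1 - c0 = -(c0 - c1) by ring, hM]; module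
  rw [hP, hM, hM']
  simp only [mulVec_smul, dotProduct_smul, mulVec_add, mulVec_sub, dotProduct_add,
    dotProduct_sub, smul_eq_mul, hsym, le_min_iff, abs_le]
  constructor
  · rintro ⟨⟨h1, h2⟩, h3, h4⟩
    refine ⟨by linarith, by linarith, by linarith, by linarith⟩
  · rintro ⟨h1, h2, h3, h4⟩
    refine ⟨⟨by linarith, by linarith⟩, by linarith, by linarith⟩
end
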